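/- Let d ≥ 1, κ ≥ d, λ ≥ d, and let p, q > 1 with 1/p + 1/q = 1. For all measurable functions f, g : ℝ^d → ℂ the generalized Hölder inequality ‖f·g‖_{A^{κ/p+λ/q,1}} ≤ ‖f‖_{A^{κ,p}} · ‖g‖_{A^{λ,q}} holds. -/

import Mathlib

/-!
At a fixed radius `R` this is Hölder's inequality applied to local suprema, with the weight
`(1+R)^{-(κ/p+λ/q)}` splitting as a product. The difficulty is measurability: the supremum of an
arbitrary function over closed balls need not be measurable, while over open balls it is lower
semicontinuous. So the local supremum of `f * g` at radius `R` is bounded by open-ball suprema at a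
slightly larger radius `R'`, and by continuity of the weight in `R'` this costs only a factor
arbitrarily close to `1`.
-/

open MeasureTheory
open scoped ENNReal NNReal

/-- `ℝ^d` as a Euclidean space. -/
abbrev E (d : ℕ) : Type := EuclideanSpace ℝ (Fin d)

/-- The `A^{κ,p}` norm: `sup_{R ≥ 0} (1+R)^{-κ/p} (∫ sup_{|z̄| ≤ R} ‖f(z+z̄)‖^p dz)^{1/p}`. -/
noncomputable def Anorm {G F : Type*} [NormedAddCommGroup G] [MeasureSpace G]
    [NormedAddCommGroup F] (κ p : ℝ) (f : G → F) : ℝ≥0∞ :=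
  ⨆ R : NNReal, (ENNReal.ofReal (1 + (R : ℝ))) ^ (-(κ / p)) *
    (∫⁻ z, ⨆ w ∈ Metric.closedBall (0 : G) (R : ℝ),
      ENNReal.ofReal (‖f (z + w)‖ ^ p)) ^ (1 / p)

open Metric

section LocalSup

variable {G : Type*} [SeminormedAddCommGroup G]

lemma iSup_ball_add_eq_iSup_indicator (r : ℝ) (F : G → ℝ≥0∞) (z : G) :
    ⨆ w ∈ ball (0 : G) r, F (z + w) = ⨆ y, (ball y r).indicator (fun _ => F y) z := by
  refine le_antisymm (iSup₂_le fun w hw => le_iSup_of_le (z + w) ?_) (iSup_le fun y => ?_)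
  · rw [Set.indicator_of_mem (by simpa [dist_eq_norm] using hw)]
  · refine Set.indicator_apply_le' (fun hz => le_iSup₂_of_le (y - z) ?_ ?_) fun _ => bot_le
    · simpa [dist_eq_norm, ← norm_neg (y - z)] using hz
    · rw [add_sub_cancel]

lemma lowerSemicontinuous_iSup_ball_add (r : ℝ) (F : G → ℝ≥0∞) :
    LowerSemicontinuous fun z => ⨆ w ∈ ball (0 : G) r, F (z + w) := by
  simp only [iSup_ball_add_eq_iSup_indicator]
  exact lowerSemicontinuous_iSup fun y => isOpen_ball.lowerSemicontinuous_indicator bot_le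

lemma iSup_ball_rpow_le_iSup_closedBall {F : Type*} [SeminormedAddCommGroup F] {r r' p : ℝ}
    (hr : r ≤ r') (hp : 0 < p) (f : G → F) (z : G) :
    (⨆ w ∈ ball (0 : G) r, ENNReal.ofReal ‖f (z + w)‖) ^ p ≤
      ⨆ w ∈ closedBall (0 : G) r', ENNReal.ofReal (‖f (z + w)‖ ^ p) := by
  rw [← ENNReal.orderIsoRpow_apply p hp, map_iSup₂]
  refine (biSup_mono fun w hw =>
    ball_subset_closedBall.trans (closedBall_subset_closedBall hr) hw).trans_eq ?_
  simp only [ENNReal.orderIsoRpow_apply, ENNReal.ofReal_rpow_of_nonneg (norm_nonneg _) hp.le]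

lemma lintegral_iSup_closedBall_mul_le [MeasurableSpace G] [OpensMeasurableSpace G]
    (μ : Measure G) {𝕜 : Type*} [SeminormedRing 𝕜] {p q : ℝ} (hpq : p.HolderConjugate q)
    {r r' : ℝ} (hr : r < r') (f g : G → 𝕜) :
    ∫⁻ z, ⨆ w ∈ closedBall (0 : G) r, ENNReal.ofReal ‖(f * g) (z + w)‖ ∂μ ≤
      (∫⁻ z, ⨆ w ∈ closedBall (0 : G) r', ENNReal.ofReal (‖f (z + w)‖ ^ p) ∂μ) ^ (1 / p) *
      (∫⁻ z, ⨆ w ∈ closedBall (0 : G) r', ENNReal.ofReal (‖g (z + w)‖ ^ q) ∂μ) ^ (1 / q) := by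
  let Sf := fun z => ⨆ w ∈ ball (0 : G) r', ENNReal.ofReal ‖f (z + w)‖
  let Sg := fun z => ⨆ w ∈ ball (0 : G) r', ENNReal.ofReal ‖g (z + w)‖
  have hSf : Measurable Sf :=
    (lowerSemicontinuous_iSup_ball_add r' fun y => ENNReal.ofReal ‖f y‖).measurable
  have hSg : Measurable Sg :=
    (lowerSemicontinuous_iSup_ball_add r' fun y => ENNReal.ofReal ‖g y‖).measurable
  have h_pointwise (z : G) :
      ⨆ w ∈ closedBall (0 : G) r, ENNReal.ofReal ‖(f * g) (z + w)‖ ≤ Sf z * Sg z := by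
    refine iSup₂_le fun w hw => ?_
    have hw' : w ∈ ball (0 : G) r' := closedBall_subset_ball hr hw
    calc ENNReal.ofReal ‖(f * g) (z + w)‖
        ≤ ENNReal.ofReal ‖f (z + w)‖ * ENNReal.ofReal ‖g (z + w)‖ := by
          rw [← ENNReal.ofReal_mul (norm_nonneg _)]
          exact ENNReal.ofReal_le_ofReal (norm_mul_le _ _)
      _ ≤ Sf z * Sg z :=
          mul_le_mul' (le_iSup₂ (f := fun w _ => ENNReal.ofReal ‖f (z + w)‖) w hw')
            (le_iSup₂ (f := fun w _ => ENNReal.ofReal ‖g (z + w)‖) w hw')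
  calc _ ≤ ∫⁻ z, Sf z * Sg z ∂μ := lintegral_mono h_pointwise
    _ ≤ (∫⁻ z, Sf z ^ p ∂μ) ^ (1 / p) * (∫⁻ z, Sg z ^ q ∂μ) ^ (1 / q) :=
      ENNReal.lintegral_mul_le_Lp_mul_Lq μ hpq hSf.aemeasurable hSg.aemeasurable
    _ ≤ _ := by
      gcongr with z z
      · exact hpq.one_div_nonneg
      · exact iSup_ball_rpow_le_iSup_closedBall le_rfl hpq.pos f z
      · exact hpq.symm.one_div_nonneg
      · exact iSup_ball_rpow_le_iSup_closedBall le_rfl hpq.symm.pos g z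

end LocalSup

lemma exists_gt_mul_rpow_le {a : ℝ≥0∞} (ha : a < 1) (s : ℝ) {r : ℝ} (hr : 0 ≤ r) :
    ∃ r' > r, a * ENNReal.ofReal (1 + r) ^ (-s) ≤ ENNReal.ofReal (1 + r') ^ (-s) := by
  have h_pos : 0 < 1 + r := by linarith
  have h_lt : a * ENNReal.ofReal (1 + r) ^ (-s) < ENNReal.ofReal (1 + r) ^ (-s) := by
    simpa using ENNReal.mul_lt_mul_left
      (ENNReal.rpow_pos (ENNReal.ofReal_pos.2 h_pos) ENNReal.ofReal_ne_top).ne'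
      (ENNReal.rpow_ne_top_of_ne_zero (ENNReal.ofReal_pos.2 h_pos).ne' ENNReal.ofReal_ne_top) ha
  have h_cont : Continuous fun x : ℝ => ENNReal.ofReal (1 + x) ^ (-s) :=
    ENNReal.continuous_rpow_const.comp (ENNReal.continuous_ofReal.comp (continuous_const_add 1))
  obtain ⟨r', h_lt', hr'⟩ := (((h_cont.tendsto r).mono_left nhdsWithin_le_nhds).eventually
    (lt_mem_nhds h_lt)).and self_mem_nhdsWithin |>.exists (f := nhdsWithin r (Set.Ioi r))
  exact ⟨r', hr', h_lt'.le⟩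

lemma le_Anorm {G F : Type*} [NormedAddCommGroup G] [MeasureSpace G] [NormedAddCommGroup F]
    (κ p : ℝ) (f : G → F) {r : ℝ} (hr : 0 ≤ r) :
    ENNReal.ofReal (1 + r) ^ (-(κ / p)) *
      (∫⁻ z, ⨆ w ∈ closedBall (0 : G) r, ENNReal.ofReal (‖f (z + w)‖ ^ p)) ^ (1 / p) ≤
      Anorm κ p f := by
  have h := le_iSup (fun R : ℝ≥0 => ENNReal.ofReal (1 + (R : ℝ)) ^ (-(κ / p)) *
    (∫⁻ z, ⨆ w ∈ closedBall (0 : G) (R : ℝ), ENNReal.ofReal (‖f (z + w)‖ ^ p)) ^ (1 / p))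
    r.toNNReal
  rwa [Real.coe_toNNReal _ hr] at h

theorem statement5 (d : ℕ) (κ lam p q : ℝ)
    (hp : 1 < p) (hpq : 1 / p + 1 / q = 1)
    (f g : E d → ℂ) :
    Anorm (κ / p + lam / q) 1 (f * g) ≤ Anorm κ p f * Anorm lam q g := by
  have hpq' : p.HolderConjugate q :=
    Real.holderConjugate_iff.2 ⟨hp, by simpa only [one_div] using hpq⟩
  refine iSup_le fun R => ENNReal.le_of_forall_lt_one_mul_le fun a ha => ?_
  obtain ⟨R', hRR', h_weight⟩ := exists_gt_mul_rpow_le ha (κ / p + lam / q) R.coe_nonneg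
  have hR' : 0 ≤ R' := R.coe_nonneg.trans hRR'.le
  have h_split : ENNReal.ofReal (1 + R') ^ (-(κ / p + lam / q)) =
      ENNReal.ofReal (1 + R') ^ (-(κ / p)) * ENNReal.ofReal (1 + R') ^ (-(lam / q)) := by
    rw [neg_add, ENNReal.rpow_add _ _ (by simp only [ne_eq, ENNReal.ofReal_eq_zero]; linarith)
      ENNReal.ofReal_ne_top]
  simp only [div_one, Real.rpow_one, ENNReal.rpow_one, ← mul_assoc]
  refine (mul_le_mul' h_weight (lintegral_iSup_closedBall_mul_le volume hpq' hRR' f g)).trans ?_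
  rw [h_split, mul_mul_mul_comm]
  exact mul_le_mul' (le_Anorm κ p f hR') (le_Anorm lam q g hR')
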